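/- Let Δ be a 2-local inner derivation on K_n(R) and let i, j, p be pairwise distinct indices in {1,…,n}. If a, b ∈ K_n(R) satisfy Δ(s_{i,p}) = [a, s_{i,p}] and Δ(s_{p,j}) = [b, s_{p,j}], then e_{i,i} a e_{j,j} = e_{i,i} b e_{j,j} and e_{j,j} a e_{i,i} = e_{j,j} b e_{i,i}; equivalently a^{i,j} = b^{i,j} and a^{j,i} = b^{j,i}. -/

import Mathlib

/-- The matrix `s_{i,j} = e_{i,j} - e_{j,i}` over a commutative ring `R`. -/
def sMat {R : Type*} [CommRing R] {n : ℕ} (i j : Fin n) : Matrix (Fin n) (Fin n) R :=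
  Matrix.single i j 1 - Matrix.single j i 1

lemma sMat_skew {R : Type*} [CommRing R] [StarRing R] {n : ℕ} (i j : Fin n) :
    ∀ k l, star ((sMat i j : Matrix (Fin n) (Fin n) R) k l)
      = - (sMat i j : Matrix (Fin n) (Fin n) R) l k := by
  intro k l
  simp only [sMat, Matrix.sub_apply, Matrix.single, Matrix.of_apply,
    star_sub, apply_ite (star : R → R), star_one, star_zero, neg_sub]
  simp only [and_comm]

/-- entry `(p, j)` of `[d, s_{i,p}]` is `d i j` when `i,j,p` are pairwise distinct. -/
lemma comm_sMat_entry1 {R : Type*} [CommRing R] {n : ℕ} (i j p : Fin n)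
    (hij : i ≠ j) (hip : i ≠ p) (hjp : j ≠ p) (d : Matrix (Fin n) (Fin n) R) :
    ((d * sMat i p - sMat i p * d : Matrix (Fin n) (Fin n) R) p j) = d i j := by
  simp [sMat, Matrix.mul_sub, Matrix.sub_mul, Matrix.sub_apply,
    Matrix.mul_single_apply_of_ne _ _ _ _ _ hjp,
    Matrix.mul_single_apply_of_ne _ _ _ _ _ hij.symm,
    Matrix.single_mul_apply_of_ne _ _ _ _ _ (Ne.symm hip)]

/-- entry `(i, p)` of `[d, s_{p,j}]` is `- d i j` when `i,j,p` are pairwise distinct. -/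
lemma comm_sMat_entry2 {R : Type*} [CommRing R] {n : ℕ} (i j p : Fin n)
    (hij : i ≠ j) (hip : i ≠ p) (hjp : j ≠ p) (d : Matrix (Fin n) (Fin n) R) :
    ((d * sMat p j - sMat p j * d : Matrix (Fin n) (Fin n) R) i p) = - d i j := by
  simp [sMat, Matrix.mul_sub, Matrix.sub_mul, Matrix.sub_apply,
    Matrix.mul_single_apply_of_ne _ _ _ _ _ (Ne.symm hjp),
    Matrix.single_mul_apply_of_ne _ _ _ _ _ hip,
    Matrix.single_mul_apply_of_ne _ _ _ _ _ hij]

/-- **Lemma 3.2 (Ayupov–Arzikulov–Umrzaqov).**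
Let `R` be a commutative unital `*`-ring with an imaginary unit `I`, and let `Δ` be a
2-local inner derivation on the Lie ring `K_n(R)` of skew-adjoint `n × n` matrices.
If `i, j, p` are pairwise distinct and `a, b ∈ K_n(R)` satisfy
`Δ(s_{i,p}) = [a, s_{i,p}]` and `Δ(s_{p,j}) = [b, s_{p,j}]`, then
`e_{i,i} a e_{j,j} = e_{i,i} b e_{j,j}` and `e_{j,j} a e_{i,i} = e_{j,j} b e_{i,i}`;
equivalently `a^{i,j} = b^{i,j}` and `a^{j,i} = b^{j,i}`. -/
theorem two_local_derivation_offdiagonal_well_defined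
    {R : Type*} [CommRing R] [StarRing R]
    (I : R) (hI2 : I * I = -1) (hIstar : star I = -I)
    (n : ℕ) (hn : 1 < n)
    (Δ : Matrix (Fin n) (Fin n) R → Matrix (Fin n) (Fin n) R)
    (hΔ : ∀ x y : Matrix (Fin n) (Fin n) R,
        (∀ k l, star (x k l) = - x l k) → (∀ k l, star (y k l) = - y l k) →
        ∃ c : Matrix (Fin n) (Fin n) R,
          (∀ k l, star (c k l) = - c l k) ∧
          Δ x = c * x - x * c ∧ Δ y = c * y - y * c)
    (i j p : Fin n) (hij : i ≠ j) (hip : i ≠ p) (hjp : j ≠ p)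
    (a b : Matrix (Fin n) (Fin n) R)
    (ha : ∀ k l, star (a k l) = - a l k)
    (hb : ∀ k l, star (b k l) = - b l k)
    (haΔ : Δ (sMat i p) = a * sMat i p - sMat i p * a)
    (hbΔ : Δ (sMat p j) = b * sMat p j - sMat p j * b) :
    (Matrix.single i i 1 * a * Matrix.single j j 1
        = Matrix.single i i 1 * b * Matrix.single j j 1) ∧
    (Matrix.single j j 1 * a * Matrix.single i i 1
        = Matrix.single j j 1 * b * Matrix.single i i 1) ∧
    a i j = b i j ∧ a j i = b j i := by
  obtain ⟨c, hc, hcx, hcy⟩ := hΔ (sMat i p) (sMat p j) (sMat_skew i p) (sMat_skew p j)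
  have h1 : a i j = c i j := by
    have := congrFun (congrFun (haΔ.symm.trans hcx) p) j
    rwa [comm_sMat_entry1 i j p hij hip hjp a, comm_sMat_entry1 i j p hij hip hjp c] at this
  have h2 : b i j = c i j := by
    have := congrFun (congrFun (hbΔ.symm.trans hcy) i) p
    rw [comm_sMat_entry2 i j p hij hip hjp b, comm_sMat_entry2 i j p hij hip hjp c] at this
    exact neg_injective this
  have hab : a i j = b i j := h1.trans h2.symm
  have hab' : a j i = b j i := by
    have := congrArg star hab
    rwa [ha, hb, neg_inj] at this
  refine ⟨?_, ?_, hab, hab'⟩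
  · ext k l
    by_cases hl : l = j
    · subst hl
      by_cases hk : k = i
      · subst hk; simp [hab]
      · simp [Matrix.single_mul_apply_of_ne _ _ _ _ _ hk]
    · simp [Matrix.mul_single_apply_of_ne _ _ _ _ _ hl]
  · ext k l
    by_cases hl : l = i
    · subst hl
      by_cases hk : k = j
      · subst hk; simp [hab']
      · simp [Matrix.single_mul_apply_of_ne _ _ _ _ _ hk]
    · simp [Matrix.mul_single_apply_of_ne _ _ _ _ _ hl]
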